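/- arXiv:2405.08450 — 6 statements merged into one kernel-verified Lean document; each statement's English description precedes it below -/
import Mathlib

section
/- For the steepest common descent direction v(x) minimizing d ↦ max_j ⟨∇f_j(x), d⟩ + ½‖d‖², it holds that max_{j=1,...,m} ⟨∇f_j(x), v(x)⟩ = −‖v(x)‖², and consequently θ(x) = −½‖v(x)‖². -/
open RealInnerProductSpace

/-- For the steepest common descent direction `v(x)`:
`D(x, v(x)) = -‖v(x)‖²` and `θ(x) = -½‖v(x)‖²`. -/
theorem stmt_4 {n m : ℕ} [NeZero m]
    (f : Fin m → EuclideanSpace ℝ (Fin n) → ℝ)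
    (g : Fin m → EuclideanSpace ℝ (Fin n))
    (x : EuclideanSpace ℝ (Fin n))
    (hg : ∀ j, HasGradientAt (f j) (g j) x)
    (v : EuclideanSpace ℝ (Fin n))
    (hv : ∀ d : EuclideanSpace ℝ (Fin n),
      (⨆ j, ⟪g j, v⟫) + (1 / 2) * ‖v‖ ^ 2 ≤ (⨆ j, ⟪g j, d⟫) + (1 / 2) * ‖d‖ ^ 2) :
    (⨆ j, ⟪g j, v⟫) = -‖v‖ ^ 2 ∧
    (⨆ j, ⟪g j, v⟫) + (1 / 2) * ‖v‖ ^ 2 = -(1 / 2) * ‖v‖ ^ 2 := by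
  set S : ℝ := ⨆ j, ⟪g j, v⟫ with hS
  have key : ∀ t : ℝ, 0 ≤ t → S + (1 / 2) * ‖v‖ ^ 2 ≤ t * S + t ^ 2 * ((1 / 2) * ‖v‖ ^ 2) := by
    intro t ht
    have h1 := hv (t • v)
    have h2 : (⨆ j, ⟪g j, t • v⟫) = t * S := by
      rw [hS, Real.mul_iSup_of_nonneg ht]
      congr 1; ext j; rw [real_inner_smul_right]
    rw [h2, norm_smul] at h1
    have : ‖t • v‖ = |t| * ‖v‖ := by rw [norm_smul]; simp
    calc S + (1 / 2) * ‖v‖ ^ 2 ≤ t * S + 1 / 2 * (‖t‖ * ‖v‖) ^ 2 := h1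
      _ = t * S + t ^ 2 * ((1 / 2) * ‖v‖ ^ 2) := by
          rw [Real.norm_eq_abs, mul_pow, sq_abs]; ring
  have main : S = -‖v‖ ^ 2 := by
    set c : ℝ := S + ‖v‖ ^ 2 with hc
    set D : ℝ := ‖v‖ ^ 2 + |c| + 1 with hD
    have hDpos : 0 < D := by positivity
    have habs : |c| < D := by
      have : (0:ℝ) ≤ ‖v‖ ^ 2 := by positivity
      linarith
    set ε : ℝ := -c / D with hε
    have hεabs : |ε| < 1 := by
      rw [hε, abs_div, abs_neg, abs_of_pos hDpos]
      exact (div_lt_one hDpos).mpr habs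
    have ht : 0 ≤ 1 + ε := by
      have := abs_lt.mp hεabs
      linarith [this.1]
    have h := key (1 + ε) ht
    -- h : S + ½‖v‖² ≤ (1+ε)S + (1+ε)²(½‖v‖²)
    -- i.e. 0 ≤ ε c + ε² ‖v‖²/2
    have h2 : 0 ≤ ε * c + ε ^ 2 * (‖v‖ ^ 2 / 2) := by nlinarith [h]
    -- ε c = -c²/D, ε² ‖v‖²/2 = c²‖v‖²/(2D²)
    have hεc : ε * c = -(c ^ 2) / D := by rw [hε]; ring
    have : c = 0 := by
      by_contra hne
      have hc2 : 0 < c ^ 2 := by positivity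
      have hv2 : ‖v‖ ^ 2 < 2 * D := by
        have : (0:ℝ) ≤ |c| := abs_nonneg c
        nlinarith
      have hDne : D ≠ 0 := ne_of_gt hDpos
      have hεD : ε * D = -c := by rw [hε, div_mul_cancel₀ _ hDne]
      have hid1 : ε * c * D = -(c ^ 2) := by
        have : ε * c * D = (ε * D) * c := by ring
        rw [this, hεD]; ring
      have hid2 : ε ^ 2 * D ^ 2 = c ^ 2 := by
        have : ε ^ 2 * D ^ 2 = (ε * D) ^ 2 := by ring
        rw [this, hεD]; ring
      have h3 : 0 ≤ (ε * c + ε ^ 2 * (‖v‖ ^ 2 / 2)) * D ^ 2 :=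
        mul_nonneg h2 (sq_nonneg D)
      have h4 : (ε * c + ε ^ 2 * (‖v‖ ^ 2 / 2)) * D ^ 2
          = (ε * c * D) * D + (ε ^ 2 * D ^ 2) * (‖v‖ ^ 2 / 2) := by ring
      rw [h4, hid1, hid2] at h3
      clear_value ε D c S
      nlinarith [h3, mul_lt_mul_of_pos_left hv2 hc2, mul_pos hc2 hDpos]
    linarith [hc ▸ this]
  refine ⟨main, ?_⟩
  rw [main]; ring
end

section
/- Let B_1,...,B_m be symmetric positive definite n×n matrices and define θ_N(x) = min_d max_j [⟨∇f_j(x), d⟩ + ½ d^T B_j d] with minimizer v_N(x). Then θ_N(x) ≤ ½ · max_j ⟨∇f_j(x), v_N(x)⟩, i.e., θ_N(x) ≤ D(x, v_N(x))/2. -/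
open RealInnerProductSpace

/-- For Newton-type directions with symmetric positive definite matrices `B j`:
`θ_N(x) ≤ D(x, v_N(x)) / 2`. -/
theorem stmt_5 {n m : ℕ} [NeZero m]
    (f : Fin m → EuclideanSpace ℝ (Fin n) → ℝ)
    (g : Fin m → EuclideanSpace ℝ (Fin n))
    (x : EuclideanSpace ℝ (Fin n))
    (hg : ∀ j, HasGradientAt (f j) (g j) x)
    (B : Fin m → EuclideanSpace ℝ (Fin n) →L[ℝ] EuclideanSpace ℝ (Fin n))
    (hsymm : ∀ j u w, ⟪B j u, w⟫ = ⟪u, B j w⟫)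
    (hpos : ∀ j (d : EuclideanSpace ℝ (Fin n)), d ≠ 0 → 0 < ⟪B j d, d⟫)
    (vN : EuclideanSpace ℝ (Fin n))
    (hvN : ∀ d : EuclideanSpace ℝ (Fin n),
      (⨆ j, ⟪g j, vN⟫ + (1 / 2) * ⟪B j vN, vN⟫) ≤ ⨆ j, ⟪g j, d⟫ + (1 / 2) * ⟪B j d, d⟫) :
    (⨆ j, ⟪g j, vN⟫ + (1 / 2) * ⟪B j vN, vN⟫) ≤ (⨆ j, ⟪g j, vN⟫) / 2 := by
  set a : Fin m → ℝ := fun j => ⟪g j, vN⟫ with ha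
  set b : Fin m → ℝ := fun j => ⟪B j vN, vN⟫ with hbdef
  have hb : ∀ j, 0 ≤ b j := by
    intro j
    rcases eq_or_ne vN 0 with h | h
    · simp [hbdef, h]
    · exact (hpos j vN h).le
  set θ : ℝ := ⨆ j, a j + (1 / 2) * b j with hθ
  set A : ℝ := ⨆ j, a j with hA
  have hbdd1 : BddAbove (Set.range fun j => a j + (1 / 2) * b j) :=
    Set.Finite.bddAbove (Set.finite_range _)
  have hbdd2 : BddAbove (Set.range a) := Set.Finite.bddAbove (Set.finite_range _)
  have hAθ : A ≤ θ := by
    apply ciSup_mono hbdd1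
    intro j
    nlinarith [hb j]
  -- key inequality for t ∈ [0,1]
  have key : ∀ t : ℝ, 0 ≤ t → t ≤ 1 → θ ≤ t ^ 2 * θ + (t - t ^ 2) * A := by
    intro t ht0 ht1
    have h1 : θ ≤ ⨆ j, ⟪g j, t • vN⟫ + (1 / 2) * ⟪B j (t • vN), t • vN⟫ := hvN (t • vN)
    refine h1.trans (ciSup_le fun j => ?_)
    have e1 : ⟪g j, t • vN⟫ = t * a j := real_inner_smul_right _ _ _
    have e2 : ⟪B j (t • vN), t • vN⟫ = t ^ 2 * b j := by
      rw [map_smul, real_inner_smul_left, real_inner_smul_right]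
      ring_nf
      rfl
    rw [e1, e2]
    have hj1 : a j + (1 / 2) * b j ≤ θ := le_ciSup hbdd1 j
    have hj2 : a j ≤ A := le_ciSup hbdd2 j
    have ht2 : 0 ≤ t - t ^ 2 := by nlinarith
    nlinarith [mul_le_mul_of_nonneg_left hj1 (sq_nonneg t),
      mul_le_mul_of_nonneg_left hj2 ht2]
  -- conclude 2θ ≤ A by taking t = 1 - ε
  have h2 : 2 * θ ≤ A := by
    refine le_of_forall_pos_le_add fun δ hδ => ?_
    set c : ℝ := θ - A with hc
    have hc0 : 0 ≤ c := by linarith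
    set ε : ℝ := min 1 (δ / (c + 1)) with hε
    have hε0 : 0 < ε := lt_min one_pos (div_pos hδ (by linarith))
    have hε1 : ε ≤ 1 := min_le_left _ _
    have hεd : ε * (c + 1) ≤ δ := by
      rw [← le_div_iff₀ (by linarith : (0:ℝ) < c + 1)]
      exact min_le_right _ _
    have hk := key (1 - ε) (by linarith) (by linarith)
    have : 2 * θ ≤ A + ε * c := by nlinarith
    have : ε * c ≤ δ := by nlinarith
    linarith
  linarith
end

section
/- Let B_1,...,B_m be symmetric matrices with c₁ ≤ λ_min(B_j) and λ_max(B_j) ≤ c₂ for all j, where 0 < c₁ ≤ c₂. Let v_N(x) be the minimizer of d ↦ max_j [⟨∇f_j(x), d⟩ + ½ d^T B_j d] and v(x) the minimizer of d ↦ max_j ⟨∇f_j(x), d⟩ + ½‖d‖². Then ‖v_N(x)‖ ≤ (1/c₁)‖v(x)‖ and max_j ⟨∇f_j(x), v_N(x)⟩ ≤ −(c₁/(2c₂²))‖v(x)‖². -/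
open RealInnerProductSpace

/-- Auxiliary limit lemma: if `(1-s)*Φ ≤ -(s*(1-s)*K)` for all `s ∈ [0,1]` and `0 ≤ K`,
then `Φ ≤ -K`. -/
lemma stmt_6_aux (Φ K : ℝ) (hK : 0 ≤ K)
    (h : ∀ s : ℝ, 0 ≤ s → s ≤ 1 → (1 - s) * Φ ≤ -(s * (1 - s) * K)) : Φ ≤ -K := by
  have h0 : Φ ≤ 0 := by have := h 0 le_rfl zero_le_one; linarith
  rcases eq_or_lt_of_le hK with h0K | hKpos
  · linarith
  · by_contra hc
    push_neg at hc
    set s : ℝ := (K - Φ) / (2 * K) with hs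
    have h2K : (0:ℝ) < 2 * K := by linarith
    have hs0 : 0 ≤ s := div_nonneg (by linarith) (by linarith)
    have hs1 : s ≤ 1 := by rw [hs, div_le_one h2K]; linarith
    have h1s : 0 < 1 - s := by
      rw [hs, sub_pos, div_lt_one h2K]; linarith
    have hkey := h s hs0 hs1
    have hΦle : Φ ≤ -(s * K) :=
      le_of_mul_le_mul_left (by linarith [hkey]) h1s
    have hsK : s * K = (K - Φ) / 2 := by
      rw [hs]; field_simp
    rw [hsK] at hΦle
    linarith

set_option maxHeartbeats 2000000 in
/-- With symmetric matrices `B j` whose eigenvalues lie in `[c₁, c₂]`, `0 < c₁ ≤ c₂`: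
`‖v_N(x)‖ ≤ (1/c₁)‖v(x)‖` and `D(x, v_N(x)) ≤ -(c₁/(2c₂²))‖v(x)‖²`. -/
theorem stmt_6 {n m : ℕ} [NeZero m]
    (f : Fin m → EuclideanSpace ℝ (Fin n) → ℝ)
    (g : Fin m → EuclideanSpace ℝ (Fin n))
    (x : EuclideanSpace ℝ (Fin n))
    (hg : ∀ j, HasGradientAt (f j) (g j) x)
    (c₁ c₂ : ℝ) (hc₁ : 0 < c₁) (hc₁₂ : c₁ ≤ c₂)
    (B : Fin m → EuclideanSpace ℝ (Fin n) →L[ℝ] EuclideanSpace ℝ (Fin n))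
    (hsymm : ∀ j u w, ⟪B j u, w⟫ = ⟪u, B j w⟫)
    (heig : ∀ j (d : EuclideanSpace ℝ (Fin n)),
      c₁ * ‖d‖ ^ 2 ≤ ⟪B j d, d⟫ ∧ ⟪B j d, d⟫ ≤ c₂ * ‖d‖ ^ 2)
    (vN : EuclideanSpace ℝ (Fin n))
    (hvN : ∀ d : EuclideanSpace ℝ (Fin n),
      (⨆ j, ⟪g j, vN⟫ + (1 / 2) * ⟪B j vN, vN⟫) ≤ ⨆ j, ⟪g j, d⟫ + (1 / 2) * ⟪B j d, d⟫)
    (v : EuclideanSpace ℝ (Fin n))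
    (hv : ∀ d : EuclideanSpace ℝ (Fin n),
      (⨆ j, ⟪g j, v⟫) + (1 / 2) * ‖v‖ ^ 2 ≤ (⨆ j, ⟪g j, d⟫) + (1 / 2) * ‖d‖ ^ 2) :
    ‖vN‖ ≤ (1 / c₁) * ‖v‖ ∧
    (⨆ j, ⟪g j, vN⟫) ≤ -(c₁ / (2 * c₂ ^ 2)) * ‖v‖ ^ 2 := by
  have hc₂ : 0 < c₂ := lt_of_lt_of_le hc₁ hc₁₂
  set V : ℝ := ‖v‖ with hVdef
  set N : ℝ := ‖vN‖ with hNdef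
  have hVnn : 0 ≤ V := norm_nonneg _
  have hNnn : 0 ≤ N := norm_nonneg _
  have hbdd : ∀ (h : Fin m → ℝ), BddAbove (Set.range h) :=
    fun h => Finite.bddAbove_range h
  set T : ℝ := ⨆ j, ⟪g j, v⟫ with hTdef
  set TN : ℝ := ⨆ j, ⟪g j, vN⟫ with hTNdef
  set Φ : ℝ := ⨆ j, ⟪g j, vN⟫ + (1 / 2) * ⟪B j vN, vN⟫ with hΦdef
  have hjT : ∀ j, ⟪g j, v⟫ ≤ T :=
    fun j => le_ciSup (hbdd (fun j => ⟪g j, v⟫)) j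
  have hjTN : ∀ j, ⟪g j, vN⟫ ≤ TN :=
    fun j => le_ciSup (hbdd (fun j => ⟪g j, vN⟫)) j
  have hjΦ : ∀ j, ⟪g j, vN⟫ + (1 / 2) * ⟪B j vN, vN⟫ ≤ Φ :=
    fun j => le_ciSup (hbdd (fun j => ⟪g j, vN⟫ + (1 / 2) * ⟪B j vN, vN⟫)) j
  -- step 0 : scaling inequality for v
  have hsv : ∀ s : ℝ, 0 ≤ s → T + (1/2) * V^2 ≤ s * T + s^2 * ((1/2) * V^2) := by
    intro s hs
    have h1 := hv (s • v)
    have h2 : (⨆ j, ⟪g j, s • v⟫) ≤ s * T := by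
      apply ciSup_le
      intro j
      rw [real_inner_smul_right]
      exact mul_le_mul_of_nonneg_left (hjT j) hs
    have h3 : ‖s • v‖ = s * V := by
      rw [norm_smul, Real.norm_eq_abs, abs_of_nonneg hs]
    rw [h3] at h1
    nlinarith [h1, h2]
  have hT0 : T ≤ -(1/2) * V^2 := by
    have h := hsv 0 le_rfl
    nlinarith [h]
  -- step 1 : T = -V^2
  have hTeq : T = -V^2 := by
    rcases eq_or_lt_of_le hVnn with hV0 | hVpos
    · have hv0 : v = 0 := by
        rw [hVdef] at hV0; exact norm_eq_zero.mp hV0.symm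
      have hT : T = 0 := by
        rw [hTdef, hv0]
        simp
      rw [hT, ← hV0]; ring
    · have hV2 : (0:ℝ) < V^2 := by positivity
      have hsle : (0:ℝ) ≤ -T / V^2 := div_nonneg (by nlinarith) (le_of_lt hV2)
      have h := hsv (-T / V^2) hsle
      have hexp : (-T / V^2) * T + (-T / V^2)^2 * ((1/2) * V^2)
          = -(T^2) / (2 * V^2) := by
        field_simp; ring
      rw [hexp] at h
      have h3 : (T + (1/2) * V^2) * (2 * V^2) ≤ -T^2 :=
        (le_div_iff₀ (by positivity : (0:ℝ) < 2 * V^2)).mp h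
      have h4 : (T + V^2)^2 ≤ 0 := by nlinarith [h3]
      have h5 : (T + V^2)^2 = 0 := le_antisymm h4 (sq_nonneg _)
      have h6 : T + V^2 = 0 := by
        exact pow_eq_zero_iff (by norm_num) |>.mp h5
      linarith
  -- step 2 : Φ ≤ -(c₁/2) * N^2
  have hΦle : Φ ≤ -((c₁/2) * N^2) := by
    have hK : 0 ≤ (c₁/2) * N^2 := by positivity
    apply stmt_6_aux _ _ hK
    intro s hs0 hs1
    have h1 := hvN (s • vN)
    have h2 : (⨆ j, ⟪g j, s • vN⟫ + (1 / 2) * ⟪B j (s • vN), s • vN⟫)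
        ≤ s * Φ - s * (1 - s) * ((c₁/2) * N^2) := by
      apply ciSup_le
      intro j
      have hBs : ⟪B j (s • vN), s • vN⟫ = s^2 * ⟪B j vN, vN⟫ := by
        rw [map_smul, real_inner_smul_left, real_inner_smul_right]; ring
      rw [hBs, real_inner_smul_right]
      have hQ : c₁ * N^2 ≤ ⟪B j vN, vN⟫ := (heig j vN).1
      have hp : 0 ≤ s * (1 - s) * (⟪B j vN, vN⟫ - c₁ * N^2) :=
        mul_nonneg (mul_nonneg hs0 (by linarith)) (by linarith)
      have hm : s * (⟪g j, vN⟫ + (1 / 2) * ⟪B j vN, vN⟫) ≤ s * Φ :=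
        mul_le_mul_of_nonneg_left (hjΦ j) hs0
      nlinarith [hp, hm]
    nlinarith [h1, h2]
  -- step 3 : TN ≤ Φ - (c₁/2) * N^2, hence TN ≤ -c₁ * N^2
  have hTN1 : TN ≤ Φ - (c₁/2) * N^2 := by
    rw [hTNdef]
    apply ciSup_le
    intro j
    have hQ : c₁ * N^2 ≤ ⟪B j vN, vN⟫ := (heig j vN).1
    have := hjΦ j
    linarith
  have hTN2 : TN ≤ -(c₁ * N^2) := by linarith
  -- step 4 : Φ ≤ -V^2/(2c₂)
  have hΦ2 : Φ ≤ -(V^2 / (2 * c₂)) := by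
    have h1 := hvN ((1/c₂) • v)
    have h2 : (⨆ j, ⟪g j, (1/c₂) • v⟫ + (1 / 2) * ⟪B j ((1/c₂) • v), (1/c₂) • v⟫)
        ≤ -(V^2 / (2 * c₂)) := by
      apply ciSup_le
      intro j
      have hBs : ⟪B j ((1/c₂) • v), (1/c₂) • v⟫ = (1/c₂)^2 * ⟪B j v, v⟫ := by
        rw [map_smul, real_inner_smul_left, real_inner_smul_right]; ring
      rw [hBs, real_inner_smul_right]
      have hjT' : ⟪g j, v⟫ ≤ -V^2 := by
        have := hjT j; rw [hTeq] at this; exact this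
      have hQ : ⟪B j v, v⟫ ≤ c₂ * V^2 := (heig j v).2
      have e1 : (1/c₂) * ⟪g j, v⟫ ≤ (1/c₂) * (-V^2) :=
        mul_le_mul_of_nonneg_left hjT' (by positivity)
      have e2 : (1 / 2) * ((1/c₂)^2 * ⟪B j v, v⟫) ≤ (1/2) * ((1/c₂)^2 * (c₂ * V^2)) := by
        apply mul_le_mul_of_nonneg_left _ (by norm_num)
        exact mul_le_mul_of_nonneg_left hQ (by positivity)
      have key : (1/c₂) * (-V^2) + (1/2) * ((1/c₂)^2 * (c₂ * V^2))
          = -(V^2 / (2 * c₂)) := by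
        field_simp; ring
      linarith [e1, e2]
    exact le_trans h1 h2
  -- Part (b)
  have partb : TN ≤ -(c₁ / (2 * c₂ ^ 2)) * V ^ 2 := by
    have h1 : TN ≤ -(V^2 / (2 * c₂)) := by
      have h2 : (0:ℝ) ≤ (c₁/2) * N^2 := by positivity
      linarith [hTN1, hΦ2]
    have h3 : c₁ / (2 * c₂ ^ 2) * V ^ 2 ≤ c₂ / (2 * c₂ ^ 2) * V ^ 2 := by
      gcongr
    have h4 : c₂ / (2 * c₂ ^ 2) * V ^ 2 = V^2 / (2 * c₂) := by
      field_simp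
    linarith [h1, h3, h4.le, h4.ge]
  -- Part (a)
  have parta : N ≤ (1 / c₁) * V := by
    rcases eq_or_lt_of_le hNnn with hN0 | hNpos
    · rw [← hN0]; positivity
    · rcases eq_or_lt_of_le hVnn with hV0 | hVpos
      · -- V = 0 : contradiction
        exfalso
        have h2 := hv (c₁ • vN)
        have h3 : (⨆ j, ⟪g j, c₁ • vN⟫) ≤ c₁ * TN := by
          apply ciSup_le
          intro j
          rw [real_inner_smul_right]
          exact mul_le_mul_of_nonneg_left (hjTN j) (le_of_lt hc₁)
        have h4 : ‖c₁ • vN‖ = c₁ * N := by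
          rw [norm_smul, Real.norm_eq_abs, abs_of_pos hc₁]
        rw [h4] at h2
        rw [hTeq, ← hV0] at h2
        nlinarith [h2, h3, hTN2, mul_pos hNpos hNpos, hc₁, mul_pos hc₁ hc₁]
      · -- V > 0 : use t = V/N
        have ht : (0:ℝ) < V / N := by positivity
        have h2 := hv ((V/N) • vN)
        have h3 : (⨆ j, ⟪g j, (V/N) • vN⟫) ≤ (V/N) * TN := by
          apply ciSup_le
          intro j
          rw [real_inner_smul_right]
          exact mul_le_mul_of_nonneg_left (hjTN j) (le_of_lt ht)
        have h4 : ‖(V/N) • vN‖ = V := by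
          rw [norm_smul, Real.norm_eq_abs, abs_of_pos ht, div_mul_cancel₀]
          exact ne_of_gt hNpos
        rw [h4, hTeq] at h2
        have h6 : -(V^2) ≤ (V/N) * TN := by linarith [h2, h3]
        have h7 : (V/N) * (-(V * N)) ≤ (V/N) * TN := by
          have e : (V/N) * (-(V * N)) = -(V^2) * (N/N) := by field_simp
          rw [e, div_self (ne_of_gt hNpos)]
          linarith
        have h5 : -(V * N) ≤ TN := le_of_mul_le_mul_left h7 ht
        have h8 : c₁ * N ≤ V := by nlinarith [hTN2, h5, hNpos]
        rw [one_div_mul_eq_div, le_div_iff₀ hc₁]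
        linarith [h8]
  exact ⟨parta, partb⟩
end

section
/- Let 0 < a_min ≤ a_j ≤ a_max and let v_a(x) be the Barzilai–Borwein type direction as above. Then ‖v_a(x)‖ ≤ (1/a_min)‖v(x)‖, where v(x) is the steepest common descent direction. -/
open RealInnerProductSpace

/-- For the Barzilai–Borwein type direction: `‖v_a(x)‖ ≤ (1/a_min)‖v(x)‖`. -/
theorem stmt_8 {n m : ℕ} [NeZero m]
    (f : Fin m → EuclideanSpace ℝ (Fin n) → ℝ)
    (g : Fin m → EuclideanSpace ℝ (Fin n))
    (x : EuclideanSpace ℝ (Fin n))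
    (hg : ∀ j, HasGradientAt (f j) (g j) x)
    (amin amax : ℝ) (hamin : 0 < amin) (haminmax : amin ≤ amax)
    (a : Fin m → ℝ) (ha : ∀ j, amin ≤ a j ∧ a j ≤ amax)
    (va : EuclideanSpace ℝ (Fin n))
    (hva : ∀ d : EuclideanSpace ℝ (Fin n),
      (⨆ j, ⟪g j, va⟫ / a j) + (1 / 2) * ‖va‖ ^ 2 ≤ (⨆ j, ⟪g j, d⟫ / a j) + (1 / 2) * ‖d‖ ^ 2)
    (v : EuclideanSpace ℝ (Fin n))
    (hv : ∀ d : EuclideanSpace ℝ (Fin n),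
      (⨆ j, ⟪g j, v⟫) + (1 / 2) * ‖v‖ ^ 2 ≤ (⨆ j, ⟪g j, d⟫) + (1 / 2) * ‖d‖ ^ 2) :
    ‖va‖ ≤ (1 / amin) * ‖v‖ := by
  by_cases hva0 : va = 0
  · rw [hva0]
    simp only [norm_zero]
    positivity
  have hna : 0 < ‖va‖ := norm_pos_iff.mpr hva0
  have hbdd : ∀ (F : Fin m → ℝ), BddAbove (Set.range F) := fun F =>
    (Set.finite_range F).bddAbove
  -- Step 1 : ⨆ j, ⟪g j, va⟫ / a j ≤ -‖va‖^2
  have step1 : (⨆ j, ⟪g j, va⟫ / a j) ≤ -‖va‖ ^ 2 := by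
    by_contra h
    push_neg at h
    set Ma := (⨆ j, ⟪g j, va⟫ / a j) with hMa
    set e := Ma + ‖va‖ ^ 2 with he
    have he0 : 0 < e := by simp only [he]; linarith
    set s := min 1 (e / ‖va‖ ^ 2) with hs
    have hs0 : 0 < s := lt_min one_pos (div_pos he0 (by positivity))
    have hs1 : s ≤ 1 := min_le_left _ _
    have hse : s ≤ e / ‖va‖ ^ 2 := min_le_right _ _
    have key := hva ((1 - s) • va)
    have hsup : (⨆ j, ⟪g j, (1 - s) • va⟫ / a j) = (1 - s) * Ma := by
      have h1 : ∀ j, ⟪g j, (1 - s) • va⟫ / a j = (1 - s) * (⟪g j, va⟫ / a j) := by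
        intro j; rw [real_inner_smul_right]; ring
      simp_rw [h1]
      exact (Real.mul_iSup_of_nonneg (by linarith) _).symm
    have hnorm : ‖(1 - s) • va‖ ^ 2 = (1 - s) ^ 2 * ‖va‖ ^ 2 := by
      rw [norm_smul, Real.norm_eq_abs, mul_pow, sq_abs]
    rw [hsup, hnorm] at key
    have hna2 : 0 < ‖va‖ ^ 2 := by positivity
    have hse' : s * ‖va‖ ^ 2 ≤ e :=
      (le_div_iff₀ hna2).mp hse
    nlinarith [key, hs0, he0, hse', sq_nonneg s]
  -- Step 2 : -⟪v, va⟫ ≤ ⨆ j, ⟪g j, va⟫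
  have step2 : -⟪v, va⟫ ≤ ⨆ j, ⟪g j, va⟫ := by
    apply le_of_forall_pos_le_add
    intro ε hε
    set t := 2 * ε / ‖va‖ ^ 2 with ht
    have ht0 : 0 < t := by positivity
    have key := hv (v + t • va)
    have hsub : (⨆ j, ⟪g j, v + t • va⟫) ≤ (⨆ j, ⟪g j, v⟫) + t * (⨆ j, ⟪g j, va⟫) := by
      apply ciSup_le
      intro j
      rw [inner_add_right, real_inner_smul_right]
      exact add_le_add (le_ciSup (f := fun j => ⟪g j, v⟫) (hbdd _) j)
        (mul_le_mul_of_nonneg_left (le_ciSup (f := fun j => ⟪g j, va⟫) (hbdd _) j) ht0.le)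
    have hnorm : ‖v + t • va‖ ^ 2 = ‖v‖ ^ 2 + 2 * t * ⟪v, va⟫ + t ^ 2 * ‖va‖ ^ 2 := by
      rw [norm_add_sq_real, real_inner_smul_right, norm_smul, Real.norm_eq_abs,
        mul_pow, sq_abs]
      ring
    rw [hnorm] at key
    have ht2 : t * ‖va‖ ^ 2 = 2 * ε := by
      rw [ht]; field_simp
    nlinarith [key, hsub, ht0]
  -- Cauchy–Schwarz
  have hcs : -(‖v‖ * ‖va‖) ≤ -⟪v, va⟫ := by
    have := real_inner_le_norm v va
    linarith
  -- Step 3 : ⨆ j, ⟪g j, va⟫ ≤ amin * (⨆ j, ⟪g j, va⟫ / a j)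
  have hMneg : (⨆ j, ⟪g j, va⟫ / a j) ≤ 0 := le_trans step1 (by nlinarith [sq_nonneg ‖va‖])
  have step3 : (⨆ j, ⟪g j, va⟫) ≤ amin * (⨆ j, ⟪g j, va⟫ / a j) := by
    apply ciSup_le
    intro j
    have haj := ha j
    have haj0 : 0 < a j := lt_of_lt_of_le hamin haj.1
    have h1 : ⟪g j, va⟫ / a j ≤ ⨆ j, ⟪g j, va⟫ / a j :=
      le_ciSup (f := fun j => ⟪g j, va⟫ / a j) (hbdd _) j
    have h2 : ⟪g j, va⟫ = a j * (⟪g j, va⟫ / a j) := by field_simp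
    rw [h2]
    nlinarith [haj.1, hMneg, h1, haj0]
  -- combine
  have hfinal : amin * ‖va‖ ^ 2 ≤ ‖v‖ * ‖va‖ := by
    nlinarith [step1, step2, step3, hcs, hamin]
  have h2 : amin * ‖va‖ ≤ ‖v‖ := le_of_mul_le_mul_right (by nlinarith [hfinal]) hna
  have h3 : ‖va‖ = (1 / amin) * (amin * ‖va‖) := by field_simp
  rw [h3]
  exact mul_le_mul_of_nonneg_left h2 (by positivity)
end

section
/- Let v(x) be the steepest common descent direction and suppose each gradient ∇f_j is Lipschitz with constant L_j, L = max_j L_j. For γ ∈ (0,1) and any d with D(x,d) ≤ −Γ₁‖v(x)‖² and ‖d‖ ≤ Γ₂‖v(x)‖ (Γ₁, Γ₂ > 0), the Armijo condition F(x + αd) ≤ F(x) + 1·γ·α·D(x,d) holds for every α ∈ (0, Δ] with Δ = 2Γ₁(1−γ)/(Γ₂² L). Consequently the backtracking stepsize satisfies α ≥ min{α₀, δ·Δ}. -/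
open RealInnerProductSpace

lemma descent_lemma {E : Type*} [NormedAddCommGroup E] [InnerProductSpace ℝ E]
    [CompleteSpace E]
    (f : E → ℝ) (g : E → E) (hg : ∀ y, HasGradientAt f (g y) y)
    (L : ℝ) (hL : 0 ≤ L) (hlip : LipschitzWith (Real.toNNReal L) g)
    (x d : E) (α : ℝ) (hα : 0 ≤ α) :
    f (x + α • d) ≤ f x + α * ⟪g x, d⟫ + L / 2 * α ^ 2 * ‖d‖ ^ 2 := by
  set φ : ℝ → ℝ := fun t => f (x + t • d) - t * ⟪g x, d⟫ - L / 2 * t ^ 2 * ‖d‖ ^ 2 with hφ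
  have hderiv : ∀ t : ℝ, HasDerivAt φ (⟪g (x + t • d), d⟫ - ⟪g x, d⟫ - L * t * ‖d‖ ^ 2) t := by
    intro t
    have hcurve : HasDerivAt (fun t : ℝ => x + t • d) d t := by
      simpa using ((hasDerivAt_id t).smul_const d).const_add x
    have h1 : HasDerivAt (fun t : ℝ => f (x + t • d)) ⟪g (x + t • d), d⟫ t := by
      have := ((hg (x + t • d)).hasFDerivAt).comp_hasDerivAt t hcurve
      simp at this
      exact this
    have h2 : HasDerivAt (fun t : ℝ => t * ⟪g x, d⟫) ⟪g x, d⟫ t := by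
      simpa using (hasDerivAt_id t).mul_const (⟪g x, d⟫)
    have h3 : HasDerivAt (fun t : ℝ => L / 2 * t ^ 2 * ‖d‖ ^ 2) (L * t * ‖d‖ ^ 2) t := by
      have := ((hasDerivAt_pow 2 t).const_mul (L / 2)).mul_const (‖d‖ ^ 2)
      rw [show L * t * ‖d‖ ^ 2 = L / 2 * ((2:ℕ) * t ^ (2 - 1)) * ‖d‖ ^ 2 by push_cast; ring]
      exact this
    exact (h1.sub h2).sub h3
  have hmono : AntitoneOn φ (Set.Icc 0 α) := by
    apply antitoneOn_of_deriv_nonpos (convex_Icc 0 α)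
    · exact fun t _ => ((hderiv t).continuousAt).continuousWithinAt
    · exact fun t _ => ((hderiv t).differentiableAt).differentiableWithinAt
    · intro t ht
      rw [interior_Icc] at ht
      rw [(hderiv t).deriv]
      have h1 : ⟪g (x + t • d) - g x, d⟫ ≤ ‖g (x + t • d) - g x‖ * ‖d‖ :=
        real_inner_le_norm _ _
      have h2 : ‖g (x + t • d) - g x‖ ≤ L * (t * ‖d‖) := by
        have hd := hlip.dist_le_mul (x + t • d) x
        rw [dist_eq_norm, dist_eq_norm] at hd
        have he : x + t • d - x = t • d := by abel
        rw [he, norm_smul, Real.norm_eq_abs, abs_of_pos ht.1,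
          Real.coe_toNNReal _ hL] at hd
        linarith
      have h3 : ⟪g (x + t • d) - g x, d⟫ = ⟪g (x + t • d), d⟫ - ⟪g x, d⟫ := by
        rw [inner_sub_left]
      have hd0 : 0 ≤ ‖d‖ := norm_nonneg d
      nlinarith [ht.1.le, norm_nonneg (g (x + t • d) - g x)]
  have := hmono (Set.left_mem_Icc.2 hα) (Set.right_mem_Icc.2 hα) hα
  simp only [hφ, zero_smul, add_zero, zero_mul, sub_zero, ne_eq,
    OfNat.ofNat_ne_zero, not_false_eq_true, zero_pow, mul_zero] at this
  linarith

/-- If gradients are `L`-Lipschitz, `D(x,d) ≤ -Γ₁‖v(x)‖²` and `‖d‖ ≤ Γ₂‖v(x)‖`, then the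
Armijo condition holds for all `α ∈ (0, Δ]` with `Δ = 2Γ₁(1-γ)/(Γ₂² L)`; consequently the
stepsize produced by backtracking satisfies `α ≥ min{α₀, δΔ}`. -/
theorem stmt_17 {n m : ℕ} [NeZero m]
    (f : Fin m → EuclideanSpace ℝ (Fin n) → ℝ)
    (g : Fin m → EuclideanSpace ℝ (Fin n) → EuclideanSpace ℝ (Fin n))
    (hg : ∀ j y, HasGradientAt (f j) (g j y) y)
    (L : ℝ) (hL : 0 < L)
    (hlip : ∀ j, LipschitzWith (Real.toNNReal L) (g j))
    (x : EuclideanSpace ℝ (Fin n))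
    (v : EuclideanSpace ℝ (Fin n))
    (hv : ∀ e : EuclideanSpace ℝ (Fin n),
      (⨆ j, ⟪g j x, v⟫) + (1 / 2) * ‖v‖ ^ 2 ≤ (⨆ j, ⟪g j x, e⟫) + (1 / 2) * ‖e‖ ^ 2)
    (γ : ℝ) (hγ : 0 < γ) (hγ1 : γ < 1)
    (Γ₁ Γ₂ : ℝ) (hΓ₁ : 0 < Γ₁) (hΓ₂ : 0 < Γ₂)
    (d : EuclideanSpace ℝ (Fin n))
    (hd1 : (⨆ j, ⟪g j x, d⟫) ≤ -Γ₁ * ‖v‖ ^ 2)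
    (hd2 : ‖d‖ ≤ Γ₂ * ‖v‖) :
    (∀ α : ℝ, 0 < α → α ≤ 2 * Γ₁ * (1 - γ) / (Γ₂ ^ 2 * L) →
      ∀ j, f j (x + α • d) ≤ f j x + γ * α * (⨆ j', ⟪g j' x, d⟫)) ∧
    (∀ α₀ δ : ℝ, 0 < α₀ → 0 < δ → δ < 1 →
      ∀ h : ℕ,
        (∀ h' : ℕ, h' < h →
          ¬ (∀ j, f j (x + (α₀ * δ ^ h') • d) ≤
              f j x + γ * (α₀ * δ ^ h') * (⨆ j', ⟪g j' x, d⟫))) →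
        (∀ j, f j (x + (α₀ * δ ^ h) • d) ≤
            f j x + γ * (α₀ * δ ^ h) * (⨆ j', ⟪g j' x, d⟫)) →
        min α₀ (δ * (2 * Γ₁ * (1 - γ) / (Γ₂ ^ 2 * L))) ≤ α₀ * δ ^ h) := by
  set D : ℝ := ⨆ j', ⟪g j' x, d⟫ with hD
  have hle : ∀ j, ⟪g j x, d⟫ ≤ D := fun j =>
    le_ciSup (f := fun j' => ⟪g j' x, d⟫) (Set.Finite.bddAbove (Set.finite_range _)) j
  have part1 : ∀ α : ℝ, 0 < α → α ≤ 2 * Γ₁ * (1 - γ) / (Γ₂ ^ 2 * L) →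
      ∀ j, f j (x + α • d) ≤ f j x + γ * α * D := by
    intro α hα hαΔ j
    have hdesc := descent_lemma (f j) (g j) (hg j) L hL.le (hlip j) x d α hα.le
    have hαΔ' : α * (Γ₂ ^ 2 * L) ≤ 2 * Γ₁ * (1 - γ) :=
      (le_div_iff₀ (by positivity)).mp hαΔ
    have h1 : ⟪g j x, d⟫ ≤ D := hle j
    have hd2' : ‖d‖ ^ 2 ≤ Γ₂ ^ 2 * ‖v‖ ^ 2 := by
      nlinarith [norm_nonneg d, norm_nonneg v]
    have hv0 : (0:ℝ) ≤ ‖v‖ ^ 2 := by positivity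
    nlinarith [mul_le_mul_of_nonneg_left hd1 (mul_pos hα (sub_pos.2 hγ1)).le,
      mul_le_mul_of_nonneg_left hd2' (by positivity : (0:ℝ) ≤ L / 2 * α ^ 2),
      mul_le_mul_of_nonneg_left hαΔ' (mul_nonneg (mul_nonneg hα.le hα.le) hv0)]
  refine ⟨part1, ?_⟩
  intro α₀ δ hα₀ hδ hδ1 h hfail _hsucc
  match h with
  | 0 => simpa using min_le_left α₀ _
  | Nat.succ h' =>
    have hfail' := hfail h' (Nat.lt_succ_self h')
    set Δ : ℝ := 2 * Γ₁ * (1 - γ) / (Γ₂ ^ 2 * L) with hΔ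
    have hα' : 0 < α₀ * δ ^ h' := by positivity
    have hgt : Δ < α₀ * δ ^ h' := by
      by_contra hc
      push_neg at hc
      exact hfail' (part1 _ hα' hc)
    calc min α₀ (δ * Δ) ≤ δ * Δ := min_le_right _ _
      _ ≤ δ * (α₀ * δ ^ h') := by nlinarith
      _ = α₀ * δ ^ (h' + 1) := by ring
end

section
/- The map x ↦ θ(x) = min_{d} [max_j ⟨∇f_j(x), d⟩ + ½‖d‖²] is continuous, and so is the map x ↦ v(x) giving the unique minimizer. -/
open RealInnerProductSpace

set_option linter.unusedVariables false

variable {n m : ℕ} [NeZero m]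

private lemma sup_cont {h : Fin m → EuclideanSpace ℝ (Fin n) → ℝ}
    (hc : ∀ j, Continuous (h j)) : Continuous (fun x => ⨆ j, h j x) := by
  have : (fun x => ⨆ j, h j x) = fun x => Finset.univ.sup' Finset.univ_nonempty (fun j => h j x) := by
    ext x; rw [Finset.sup'_univ_eq_ciSup]
  rw [this]
  exact Continuous.finset_sup'_apply Finset.univ_nonempty (fun j _ => hc j)

-- sup shift bound
private lemma sup_shift (g : Fin m → EuclideanSpace ℝ (Fin n) → EuclideanSpace ℝ (Fin n))
    (x y d : EuclideanSpace ℝ (Fin n)) :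
    (⨆ j, ⟪g j x, d⟫) ≤ (⨆ j, ⟪g j y, d⟫) + (⨆ j, ‖g j x - g j y‖) * ‖d‖ := by
  apply ciSup_le
  intro j
  have h1 : ⟪g j x, d⟫ = ⟪g j y, d⟫ + ⟪g j x - g j y, d⟫ := by
    rw [inner_sub_left]; ring
  have h2 : ⟪g j x - g j y, d⟫ ≤ ‖g j x - g j y‖ * ‖d‖ := real_inner_le_norm _ _
  have h3 : ⟪g j y, d⟫ ≤ ⨆ j, ⟪g j y, d⟫ := le_ciSup (f := fun j => ⟪g j y, d⟫) (Set.Finite.bddAbove (Set.finite_range _)) j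
  have h4 : ‖g j x - g j y‖ ≤ ⨆ j, ‖g j x - g j y‖ := le_ciSup (f := fun j => ‖g j x - g j y‖) (Set.Finite.bddAbove (Set.finite_range _)) j
  nlinarith [norm_nonneg d]

-- midpoint sup bound
private lemma sup_mid (g : Fin m → EuclideanSpace ℝ (Fin n) → EuclideanSpace ℝ (Fin n))
    (x d w : EuclideanSpace ℝ (Fin n)) :
    (⨆ j, ⟪g j x, (2:ℝ)⁻¹ • (d + w)⟫) ≤ ((⨆ j, ⟪g j x, d⟫) + (⨆ j, ⟪g j x, w⟫)) / 2 := by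
  apply ciSup_le
  intro j
  have : ⟪g j x, (2:ℝ)⁻¹ • (d + w)⟫ = (⟪g j x, d⟫ + ⟪g j x, w⟫) / 2 := by
    rw [real_inner_smul_right, inner_add_right]; ring
  rw [this]
  have h3 : ⟪g j x, d⟫ ≤ ⨆ j, ⟪g j x, d⟫ := le_ciSup (f := fun j => ⟪g j x, d⟫) (Set.Finite.bddAbove (Set.finite_range _)) j
  have h4 : ⟪g j x, w⟫ ≤ ⨆ j, ⟪g j x, w⟫ := le_ciSup (f := fun j => ⟪g j x, w⟫) (Set.Finite.bddAbove (Set.finite_range _)) j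
  linarith

-- quadratic growth at the minimizer (strong convexity via midpoint)
private lemma quad_growth (g : Fin m → EuclideanSpace ℝ (Fin n) → EuclideanSpace ℝ (Fin n))
    (v : EuclideanSpace ℝ (Fin n) → EuclideanSpace ℝ (Fin n))
    (hv : ∀ x d : EuclideanSpace ℝ (Fin n),
      (⨆ j, ⟪g j x, v x⟫) + (1 / 2) * ‖v x‖ ^ 2 ≤ (⨆ j, ⟪g j x, d⟫) + (1 / 2) * ‖d‖ ^ 2)
    (x d : EuclideanSpace ℝ (Fin n)) :
    (⨆ j, ⟪g j x, v x⟫) + (1 / 2) * ‖v x‖ ^ 2 + (1/4) * ‖d - v x‖ ^ 2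
      ≤ (⨆ j, ⟪g j x, d⟫) + (1 / 2) * ‖d‖ ^ 2 := by
  have hmid := hv x ((2:ℝ)⁻¹ • (d + v x))
  have hsup := sup_mid g x d (v x)
  have hpar : ‖(2:ℝ)⁻¹ • (d + v x)‖ ^ 2 = (2 * ‖d‖^2 + 2 * ‖v x‖^2 - ‖d - v x‖^2) / 4 := by
    rw [norm_smul]
    have h1 : ‖d + v x‖ ^ 2 + ‖d - v x‖ ^ 2 = 2 * (‖d‖^2 + ‖v x‖^2) := by
      have := parallelogram_law_with_norm ℝ d (v x)
      nlinarith [this]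
    simp only [norm_inv, Real.norm_ofNat]
    nlinarith [h1]
  rw [hpar] at hmid
  linarith

-- norm bound on v x
private lemma v_bound (g : Fin m → EuclideanSpace ℝ (Fin n) → EuclideanSpace ℝ (Fin n))
    (v : EuclideanSpace ℝ (Fin n) → EuclideanSpace ℝ (Fin n))
    (hv : ∀ x d : EuclideanSpace ℝ (Fin n),
      (⨆ j, ⟪g j x, v x⟫) + (1 / 2) * ‖v x‖ ^ 2 ≤ (⨆ j, ⟪g j x, d⟫) + (1 / 2) * ‖d‖ ^ 2)
    (x : EuclideanSpace ℝ (Fin n)) :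
    ‖v x‖ ≤ 2 * ‖g 0 x‖ := by
  have h0 := hv x 0
  have hz : (⨆ j, ⟪g j x, (0 : EuclideanSpace ℝ (Fin n))⟫) = 0 := by
    simp [inner_zero_right]
  rw [hz] at h0
  simp only [norm_zero] at h0
  have hlb : ⟪g 0 x, v x⟫ ≤ ⨆ j, ⟪g j x, v x⟫ :=
    le_ciSup (f := fun j => ⟪g j x, v x⟫) (Set.Finite.bddAbove (Set.finite_range _)) 0
  have hcs : -(‖g 0 x‖ * ‖v x‖) ≤ ⟪g 0 x, v x⟫ := by
    have := abs_real_inner_le_norm (g 0 x) (v x)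
    have := abs_le.mp this
    linarith [this.1]
  nlinarith [norm_nonneg (v x), norm_nonneg (g 0 x)]

/-- The maps `x ↦ θ(x)` and `x ↦ v(x)` are continuous, where `v(x)` is the unique
minimizer of `d ↦ max_j ⟪∇f_j(x), d⟫ + ½‖d‖²` and `θ(x)` its minimal value. -/
theorem stmt_18 {n m : ℕ} [NeZero m]
    (f : Fin m → EuclideanSpace ℝ (Fin n) → ℝ)
    (g : Fin m → EuclideanSpace ℝ (Fin n) → EuclideanSpace ℝ (Fin n))
    (hg : ∀ j y, HasGradientAt (f j) (g j y) y)
    (hgc : ∀ j, Continuous (g j))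
    (v : EuclideanSpace ℝ (Fin n) → EuclideanSpace ℝ (Fin n))
    (hv : ∀ x d : EuclideanSpace ℝ (Fin n),
      (⨆ j, ⟪g j x, v x⟫) + (1 / 2) * ‖v x‖ ^ 2 ≤ (⨆ j, ⟪g j x, d⟫) + (1 / 2) * ‖d‖ ^ 2) :
    Continuous (fun x => (⨆ j, ⟪g j x, v x⟫) + (1 / 2) * ‖v x‖ ^ 2) ∧
    Continuous v := by
  have hvc : Continuous v := by
    rw [continuous_iff_continuousAt]
    intro x₀
    set ε : EuclideanSpace ℝ (Fin n) → ℝ := fun x => ⨆ j, ‖g j x - g j x₀‖ with hε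
    have hεc : Continuous ε :=
      sup_cont (fun j => ((hgc j).sub continuous_const).norm)
    have hε0 : ε x₀ = 0 := by simp [hε]
    have hεnn : ∀ x, 0 ≤ ε x := fun x =>
      Real.iSup_nonneg (fun j => norm_nonneg _)
    set B : EuclideanSpace ℝ (Fin n) → ℝ :=
      fun x => 4 * ε x * (2 * ‖g 0 x‖ + ‖v x₀‖) with hB
    have hBc : Continuous B := by
      apply Continuous.mul (continuous_const.mul hεc)
      exact Continuous.add (continuous_const.mul (hgc 0).norm) continuous_const
    have hB0 : B x₀ = 0 := by simp [hB, hε0]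
    have hBnn : ∀ x, 0 ≤ B x := by
      intro x
      have := hεnn x
      have : (0:ℝ) ≤ 4 * ε x := by linarith
      apply mul_nonneg this
      positivity
    have key : ∀ x, ‖v x - v x₀‖ ^ 2 ≤ B x := by
      intro x
      have h1 := quad_growth g v hv x₀ (v x)
      -- φ x₀ (v x) ≤ φ x (v x) + ε x ‖v x‖
      have h2 : (⨆ j, ⟪g j x₀, v x⟫) ≤ (⨆ j, ⟪g j x, v x⟫) + ε x * ‖v x‖ := by
        have := sup_shift g x₀ x (v x)
        have hrev : (⨆ j, ‖g j x₀ - g j x‖) = ε x := by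
          simp only [hε, norm_sub_rev]
        rw [hrev] at this
        exact this
      have h3 := hv x (v x₀)
      have h4 : (⨆ j, ⟪g j x, v x₀⟫) ≤ (⨆ j, ⟪g j x₀, v x₀⟫) + ε x * ‖v x₀‖ :=
        sup_shift g x x₀ (v x₀)
      have h5 : ‖v x‖ ≤ 2 * ‖g 0 x‖ := v_bound g v hv x
      have hεx := hεnn x
      simp only [hB]
      nlinarith [norm_nonneg (v x₀), norm_nonneg (v x),
        mul_le_mul_of_nonneg_left h5 hεx]
    have hsq : Filter.Tendsto (fun x => ‖v x - v x₀‖) (nhds x₀) (nhds 0) := by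
      apply squeeze_zero (fun x => norm_nonneg _) (g := fun x => Real.sqrt (B x))
      · intro x
        rw [show ‖v x - v x₀‖ = Real.sqrt (‖v x - v x₀‖ ^ 2) by
          rw [Real.sqrt_sq (norm_nonneg _)]]
        exact Real.sqrt_le_sqrt (key x)
      · have : Real.sqrt (B x₀) = 0 := by rw [hB0, Real.sqrt_zero]
        rw [← this]
        exact (Real.continuous_sqrt.comp hBc).continuousAt
    exact tendsto_iff_norm_sub_tendsto_zero.mpr hsq
  refine ⟨?_, hvc⟩
  apply Continuous.add
  · exact sup_cont (fun j => (hgc j).inner hvc)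
  · exact continuous_const.mul ((continuous_norm.comp hvc).pow 2)
end
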